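/- For every even integer Δ ≥ 2 and every integer t with 1 ≤ t ≤ Δ, setting h := Δ + 1 − t, there exists a finite simple Δ-regular graph G whose h-odd chromatic number satisfies χ_o^h(G) > (1/2)·Δ²/(t + 1). -/

import Mathlib

open Finset

/-- The set of colours that occur an odd number of times on `X` under `σ`. -/
def oddColorsOn {V : Type*} {k : ℕ} (X : Finset V) (σ : V → Fin k) : Finset (Fin k) :=
  Finset.univ.filter fun c => Odd ((X.filter fun v => σ v = c).card)

/-- `σ` is a proper colouring of the simple graph `G`. -/
def IsProperColoring {V : Type*} {k : ℕ} (G : SimpleGraph V) (σ : V → Fin k) : Prop :=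
  ∀ u v, G.Adj u v → σ u ≠ σ v

/-- An odd colouring of a graph: proper, and every vertex with a neighbour has a colour
occurring an odd number of times on its open neighbourhood. -/
def IsOddColoring {V : Type*} [Fintype V] {k : ℕ} (G : SimpleGraph V) [DecidableRel G.Adj]
    (σ : V → Fin k) : Prop :=
  IsProperColoring G σ ∧
    ∀ v : V, (G.neighborFinset v).Nonempty → (oddColorsOn (G.neighborFinset v) σ).Nonempty

/-- The odd chromatic number of a graph. -/
noncomputable def oddChromNum {V : Type*} [Fintype V] (G : SimpleGraph V)
    [DecidableRel G.Adj] : ℕ :=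
  sInf {k | ∃ σ : V → Fin k, IsOddColoring G σ}

/-- An `h`-odd colouring: proper, and every vertex with a neighbour has at least
`min h (deg v)` colours occurring an odd number of times on its neighbourhood. -/
def IsHOddColoring {V : Type*} [Fintype V] {k : ℕ} (h : ℕ) (G : SimpleGraph V)
    [DecidableRel G.Adj] (σ : V → Fin k) : Prop :=
  IsProperColoring G σ ∧
    ∀ v : V, (G.neighborFinset v).Nonempty →
      min h (G.degree v) ≤ (oddColorsOn (G.neighborFinset v) σ).card

/-- The `h`-odd chromatic number of a graph. -/
noncomputable def hOddChromNum {V : Type*} [Fintype V] (h : ℕ) (G : SimpleGraph V)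
    [DecidableRel G.Adj] : ℕ :=
  sInf {k | ∃ σ : V → Fin k, IsHOddColoring h G σ}

/-- The chromatic number of a graph, as a natural number. -/
noncomputable def chrom {V : Type*} (G : SimpleGraph V) : ℕ := sInf {n | G.Colorable n}

/-- `Δ(H)`: maximum over vertices of the number of hyperedges containing it. -/
def hypDeg {V : Type*} [Fintype V] [DecidableEq V] (H : Finset (Finset V)) : ℕ :=
  Finset.univ.sup fun v => (H.filter fun e => v ∈ e).card

/-- `ε(H)`: minimum size of a hyperedge. -/
noncomputable def hypMinEdge {V : Type*} (H : Finset (Finset V)) : ℕ :=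
  sInf {n | ∃ e ∈ H, e.card = n}

/-- An odd colouring of a graph-hypergraph pair: a proper colouring of `G` such that every
hyperedge has a colour occurring an odd number of times on it. -/
def IsOddColoringPair {V : Type*} {k : ℕ} (G : SimpleGraph V) (H : Finset (Finset V))
    (σ : V → Fin k) : Prop :=
  IsProperColoring G σ ∧ ∀ e ∈ H, (oddColorsOn e σ).Nonempty

/-- An `h`-odd colouring of a graph-hypergraph pair: a proper colouring of `G` such that every
hyperedge `e` has at least `min h |e|` colours occurring an odd number of times on it. -/
def IsHOddColoringPair {V : Type*} {k : ℕ} (h : ℕ) (G : SimpleGraph V) (H : Finset (Finset V))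
    (σ : V → Fin k) : Prop :=
  IsProperColoring G σ ∧ ∀ e ∈ H, min h e.card ≤ (oddColorsOn e σ).card

/-- The maximum degree of the subgraph of `G` induced on `S`. -/
def inducedMaxDegree {V : Type*} [Fintype V] [DecidableEq V] (G : SimpleGraph V)
    [DecidableRel G.Adj] (S : Finset V) : ℕ :=
  S.sup fun v => (G.neighborFinset v ∩ S).card

attribute [local instance] Classical.propDecidable

/-!
The extremal graph is the rook's graph `K_m □ K_m` with `m = Δ/2 + 1`. Each neighbourhood is the
union of a row and a column, two cliques, so a proper colouring uses every colour at most twice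
on it; having `Δ + 1 - t` odd colours there leaves at most `t - 1` ordered pairs of equally
coloured neighbours. Two non-adjacent vertices have two common neighbours, so double counting
gives `2 ∑ r_c (r_c - 1) ≤ m² (t - 1)` over the colour classes `r_c`, and Cauchy–Schwarz then
yields `k (t + 1) ≥ 2 m² > Δ² / 2`.
-/

open SimpleGraph

section ColorMultiplicity

variable {V : Type*} {k : ℕ}

def colorCount (X : Finset V) (σ : V → Fin k) (c : Fin k) : ℕ := #{v ∈ X | σ v = c}

lemma oddColorsOn_eq_filter_odd_colorCount (X : Finset V) (σ : V → Fin k) :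
    oddColorsOn X σ = ({c | Odd (colorCount X σ c)} : Finset (Fin k)) := rfl

lemma sum_colorCount (X : Finset V) (σ : V → Fin k) : ∑ c, colorCount X σ c = #X :=
  (card_eq_sum_card_fiberwise fun _ _ => mem_univ _).symm

lemma sum_colorCount_sq (X : Finset V) (σ : V → Fin k) :
    ∑ c, colorCount X σ c ^ 2 = ∑ c, colorCount X σ c * (colorCount X σ c - 1) + #X := by
  rw [← sum_colorCount X σ, ← sum_add_distrib]
  refine sum_congr rfl fun c _ => ?_
  cases colorCount X σ c <;> simp [sq, Nat.mul_succ]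

lemma sum_colorCount_mul_pred_add_card_oddColorsOn {X : Finset V} {σ : V → Fin k}
    (h : ∀ c, colorCount X σ c ≤ 2) :
    ∑ c, colorCount X σ c * (colorCount X σ c - 1) + #(oddColorsOn X σ) = #X := by
  rw [oddColorsOn_eq_filter_odd_colorCount, card_filter, ← sum_add_distrib, ← sum_colorCount X σ]
  refine sum_congr rfl fun c _ => ?_
  have := h c
  interval_cases colorCount X σ c <;> decide

lemma sq_card_le_mul_sum_colorCount_sq [Fintype V] (σ : V → Fin k) :
    Fintype.card V ^ 2 ≤ k * ∑ c, colorCount univ σ c ^ 2 := by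
  simpa [sum_colorCount] using sq_sum_le_card_mul_sum_sq (s := univ) (f := colorCount univ σ)

lemma colorCount_le_one_of_injOn {X : Finset V} {σ : V → Fin k} (hσ : Set.InjOn σ X)
    (c : Fin k) : colorCount X σ c ≤ 1 := by
  refine card_le_one.2 fun x hx y hy => ?_
  simp only [mem_filter] at hx hy
  exact hσ hx.1 hy.1 (hx.2.trans hy.2.symm)

lemma card_oddColorsOn_of_injective {σ : V → Fin k} (hσ : Function.Injective σ) (X : Finset V) :
    #(oddColorsOn X σ) = #X := by
  have h1 := colorCount_le_one_of_injOn (X := X) hσ.injOn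
  have := sum_colorCount_mul_pred_add_card_oddColorsOn fun c => (h1 c).trans one_le_two
  rwa [sum_eq_zero fun c _ => by
    rcases Nat.le_one_iff_eq_zero_or_eq_one.1 (h1 c) with h | h <;> simp [h], zero_add] at this

end ColorMultiplicity

section ProperColoring

lemma IsProperColoring.injOn_of_isClique {V : Type*} {G : SimpleGraph V} {k : ℕ}
    {σ : V → Fin k} (hσ : IsProperColoring G σ) {A : Set V} (hA : G.IsClique A) :
    Set.InjOn σ A :=
  fun x hx y hy hxy => by_contra fun hne => hσ x y (hA hx hy hne) hxy

variable {V : Type*} [DecidableEq V] {G : SimpleGraph V} {k : ℕ} {σ : V → Fin k}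

lemma IsProperColoring.colorCount_le_two {A B X : Finset V} (hσ : IsProperColoring G σ)
    (hA : G.IsClique (A : Set V)) (hB : G.IsClique (B : Set V)) (hX : X ⊆ A ∪ B) (c : Fin k) :
    colorCount X σ c ≤ 2 :=
  calc colorCount X σ c ≤ colorCount (A ∪ B) σ c := card_le_card (filter_subset_filter _ hX)
    _ ≤ colorCount A σ c + colorCount B σ c := by
      rw [colorCount, filter_union]; exact card_union_le _ _
    _ ≤ 2 := by linarith [colorCount_le_one_of_injOn (hσ.injOn_of_isClique hA) c,
      colorCount_le_one_of_injOn (hσ.injOn_of_isClique hB) c]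

variable [Fintype V] [DecidableRel G.Adj]

/-- Two distinct vertices of colour `c` are non-adjacent, so each ordered pair of them lies in at
least `μ` neighbourhoods. -/
lemma IsProperColoring.mul_colorCount_mul_pred_le_sum {μ : ℕ} (hσ : IsProperColoring G σ)
    (hμ : ∀ u w, u ≠ w → ¬ G.Adj u w → μ ≤ #(G.neighborFinset u ∩ G.neighborFinset w))
    (c : Fin k) :
    μ * (colorCount univ σ c * (colorCount univ σ c - 1)) ≤
      ∑ v, colorCount (G.neighborFinset v) σ c * (colorCount (G.neighborFinset v) σ c - 1) := by
  set C : Finset V := {v | σ v = c}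
  have hoffDiag : ∀ v, colorCount (G.neighborFinset v) σ c *
      (colorCount (G.neighborFinset v) σ c - 1) =
        #{p ∈ C.offDiag | p.1 ∈ G.neighborFinset v ∧ p.2 ∈ G.neighborFinset v} := by
    intro v
    rw [colorCount, Nat.mul_sub_one, ← offDiag_card]
    congr 1
    ext p
    simp only [mem_offDiag, mem_filter, mem_univ, true_and, C]
    tauto
  have hcommon : ∀ p ∈ C.offDiag, μ ≤
      #{v | p.1 ∈ G.neighborFinset v ∧ p.2 ∈ G.neighborFinset v} := by
    rintro ⟨u, w⟩ hp
    simp only [mem_offDiag, mem_filter, mem_univ, true_and, C] at hp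
    obtain ⟨hu, hw, hne⟩ := hp
    convert hμ u w hne fun hadj => hσ u w hadj (hu.trans hw.symm) using 2
    ext v
    simp [adj_comm]
  calc μ * (colorCount univ σ c * (colorCount univ σ c - 1))
      = ∑ _p ∈ C.offDiag, μ := by rw [sum_const, smul_eq_mul, offDiag_card, ← Nat.mul_sub_one,
          mul_comm, colorCount]
    _ ≤ ∑ p ∈ C.offDiag, #{v | p.1 ∈ G.neighborFinset v ∧ p.2 ∈ G.neighborFinset v} :=
      sum_le_sum hcommon
    _ = ∑ v, #{p ∈ C.offDiag | p.1 ∈ G.neighborFinset v ∧ p.2 ∈ G.neighborFinset v} := by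
      simp only [card_filter]; exact sum_comm
    _ = _ := by simp only [hoffDiag]

end ProperColoring

section HOddColoring

variable {V : Type*} [Fintype V] {G : SimpleGraph V} [DecidableRel G.Adj] {k : ℕ}
  {σ : V → Fin k}

lemma IsHOddColoring.sum_colorCount_mul_pred_le {Δ t : ℕ} (hσ : IsHOddColoring (Δ + 1 - t) G σ)
    {v : V} (hv : G.degree v = Δ) (h2 : ∀ c, colorCount (G.neighborFinset v) σ c ≤ 2) :
    ∑ c, colorCount (G.neighborFinset v) σ c * (colorCount (G.neighborFinset v) σ c - 1) ≤
      t - 1 := by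
  have hsum := sum_colorCount_mul_pred_add_card_oddColorsOn h2
  rw [card_neighborFinset_eq_degree, hv] at hsum
  rcases (G.neighborFinset v).eq_empty_or_nonempty with hempty | hne
  · rw [← card_neighborFinset_eq_degree, hempty, card_empty] at hv
    omega
  · have hodd := hσ.2 v hne
    rw [hv] at hodd
    omega

theorem IsHOddColoring.mul_card_le [DecidableEq V] {Δ t μ : ℕ}
    (hσ : IsHOddColoring (Δ + 1 - t) G σ) (hreg : ∀ v, G.degree v = Δ)
    (hμ : ∀ u w, u ≠ w → ¬ G.Adj u w → μ ≤ #(G.neighborFinset u ∩ G.neighborFinset w))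
    (hcover : ∀ v, ∃ A B : Finset V, G.IsClique (A : Set V) ∧ G.IsClique (B : Set V) ∧
      G.neighborFinset v ⊆ A ∪ B) :
    μ * Fintype.card V ≤ k * (t - 1 + μ) := by
  set n := Fintype.card V
  set r := colorCount univ σ
  have hlocal : ∀ v, ∑ c, colorCount (G.neighborFinset v) σ c *
      (colorCount (G.neighborFinset v) σ c - 1) ≤ t - 1 := fun v => by
    obtain ⟨A, B, hA, hB, hAB⟩ := hcover v
    exact hσ.sum_colorCount_mul_pred_le (hreg v) (hσ.1.colorCount_le_two hA hB hAB)
  have hpairs : μ * ∑ c, r c * (r c - 1) ≤ n * (t - 1) :=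
    calc μ * ∑ c, r c * (r c - 1)
        ≤ ∑ c, ∑ v, colorCount (G.neighborFinset v) σ c *
            (colorCount (G.neighborFinset v) σ c - 1) := by
          rw [mul_sum]; exact sum_le_sum fun c _ => hσ.1.mul_colorCount_mul_pred_le_sum hμ c
      _ = ∑ v, ∑ c, colorCount (G.neighborFinset v) σ c *
            (colorCount (G.neighborFinset v) σ c - 1) := sum_comm
      _ ≤ ∑ _v : V, (t - 1) := sum_le_sum fun v _ => hlocal v
      _ = n * (t - 1) := by rw [sum_const, card_univ, smul_eq_mul]
  have hsq : μ * ∑ c, r c ^ 2 ≤ n * (t - 1 + μ) := by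
    rw [sum_colorCount_sq, card_univ, mul_add, mul_add]
    exact add_le_add hpairs (le_of_eq (mul_comm _ _))
  rcases Nat.eq_zero_or_pos n with hn | hn
  · simp [hn]
  refine Nat.le_of_mul_le_mul_right ?_ hn
  calc μ * n * n = μ * n ^ 2 := by ring
    _ ≤ μ * (k * ∑ c, r c ^ 2) := Nat.mul_le_mul_left μ (sq_card_le_mul_sum_colorCount_sq σ)
    _ = k * (μ * ∑ c, r c ^ 2) := by ring
    _ ≤ k * (n * (t - 1 + μ)) := Nat.mul_le_mul_left k hsq
    _ = k * (t - 1 + μ) * n := by ring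

end HOddColoring

lemma oddColorsOn_map {V W : Type*} {k : ℕ} (X : Finset V) (f : V ↪ W) (σ : W → Fin k) :
    oddColorsOn (X.map f) σ = oddColorsOn X (σ ∘ f) := by
  simp only [oddColorsOn_eq_filter_odd_colorCount, colorCount, filter_map, card_map]
  rfl

lemma IsHOddColoring.comp_iso {V W : Type*} [Fintype V] [Fintype W] {G : SimpleGraph V}
    {G' : SimpleGraph W} [DecidableRel G.Adj] [DecidableRel G'.Adj] {h k : ℕ} {σ : W → Fin k}
    (hσ : IsHOddColoring h G' σ) (f : G ≃g G') : IsHOddColoring h G (σ ∘ f) := by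
  have hN : ∀ v, (G.neighborFinset v).map f.toEquiv.toEmbedding = G'.neighborFinset (f v) := by
    intro v
    ext w
    obtain ⟨w, rfl⟩ := f.surjective w
    change f.toEquiv.toEmbedding w ∈ _ ↔ _
    rw [mem_map', mem_neighborFinset, mem_neighborFinset, f.map_adj_iff]
  refine ⟨fun u v huv => hσ.1 _ _ (f.map_adj_iff.2 huv), fun v hne => ?_⟩
  have := hσ.2 (f v) (by rw [← hN]; exact hne.map)
  rwa [← hN, oddColorsOn_map, f.degree_eq] at this

lemma isHOddColoring_of_injective {V : Type*} [Fintype V] {G : SimpleGraph V}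
    [DecidableRel G.Adj] {h k : ℕ} {σ : V → Fin k} (hσ : Function.Injective σ) :
    IsHOddColoring h G σ := by
  refine ⟨fun u v huv => hσ.ne huv.ne, fun v _ => ?_⟩
  rw [card_oddColorsOn_of_injective hσ, card_neighborFinset_eq_degree]
  exact min_le_right _ _

lemma exists_isHOddColoring_hOddChromNum {V : Type*} [Fintype V] (h : ℕ) (G : SimpleGraph V)
    [DecidableRel G.Adj] : ∃ σ : V → Fin (hOddChromNum h G), IsHOddColoring h G σ :=
  Nat.sInf_mem (s := {k | ∃ σ : V → Fin k, IsHOddColoring h G σ})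
    ⟨_, _, isHOddColoring_of_injective (Fintype.equivFin V).injective⟩

def rookGraph (m : ℕ) : SimpleGraph (Fin m × Fin m) :=
  completeGraph (Fin m) □ completeGraph (Fin m)

namespace rookGraph

variable {m : ℕ}

lemma adj_iff {x y : Fin m × Fin m} :
    (rookGraph m).Adj x y ↔ x.1 ≠ y.1 ∧ x.2 = y.2 ∨ x.2 ≠ y.2 ∧ x.1 = y.1 := by
  simp [rookGraph]

lemma degree_eq (x : Fin m × Fin m) : (rookGraph m).degree x = 2 * (m - 1) := by
  rw [rookGraph, degree_boxProd, complete_graph_degree, complete_graph_degree, Fintype.card_fin]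
  ring

/-- The two other corners of the rectangle spanned by `x` and `y`. -/
lemma two_le_card_commonNeighbors {x y : Fin m × Fin m} (hne : x ≠ y)
    (hxy : ¬ (rookGraph m).Adj x y) :
    2 ≤ #((rookGraph m).neighborFinset x ∩ (rookGraph m).neighborFinset y) := by
  rw [adj_iff] at hxy
  have h1 : x.1 ≠ y.1 := fun h => hne (Prod.ext h (by by_contra h'; exact hxy (Or.inr ⟨h', h⟩)))
  have h2 : x.2 ≠ y.2 := fun h => hxy (Or.inl ⟨h1, h⟩)
  refine le_trans ?_ (card_le_card (s := {(x.1, y.2), (y.1, x.2)}) ?_)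
  · rw [card_pair]; simp [h1]
  · intro z hz
    simp only [mem_insert, mem_singleton] at hz
    rcases hz with rfl | rfl <;> simp [adj_iff, h1, h2, h1.symm, h2.symm]

lemma neighborFinset_subset_union_isClique (x : Fin m × Fin m) :
    ∃ A B : Finset (Fin m × Fin m), (rookGraph m).IsClique (A : Set (Fin m × Fin m)) ∧
      (rookGraph m).IsClique (B : Set (Fin m × Fin m)) ∧
        (rookGraph m).neighborFinset x ⊆ A ∪ B := by
  refine ⟨{x.1} ×ˢ univ, univ ×ˢ {x.2}, ?_, ?_, ?_⟩
  · intro y hy z hz hyz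
    simp only [coe_product, coe_singleton, coe_univ, Set.mem_prod, Set.mem_singleton_iff] at hy hz
    rw [adj_iff]
    exact Or.inr ⟨fun h => hyz (Prod.ext (hy.1.trans hz.1.symm) h), hy.1.trans hz.1.symm⟩
  · intro y hy z hz hyz
    simp only [coe_product, coe_singleton, coe_univ, Set.mem_prod, Set.mem_singleton_iff] at hy hz
    rw [adj_iff]
    exact Or.inl ⟨fun h => hyz (Prod.ext h (hy.2.trans hz.2.symm)), hy.2.trans hz.2.symm⟩
  · intro y hy
    rw [mem_neighborFinset, adj_iff] at hy
    simp only [mem_union, mem_product, mem_singleton, mem_univ, and_true, true_and]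
    rcases hy with ⟨-, h⟩ | ⟨-, h⟩
    · exact Or.inr h.symm
    · exact Or.inl h.symm

theorem two_mul_sq_le_of_isHOddColoring {t k : ℕ} (ht : 1 ≤ t) {σ : Fin m × Fin m → Fin k}
    (hσ : IsHOddColoring (2 * (m - 1) + 1 - t) (rookGraph m) σ) :
    2 * m ^ 2 ≤ k * (t + 1) := by
  have := hσ.mul_card_le degree_eq (fun _ _ => two_le_card_commonNeighbors)
    neighborFinset_subset_union_isClique
  rwa [Fintype.card_prod, Fintype.card_fin, ← sq, show t - 1 + 2 = t + 1 by omega] at this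

theorem two_mul_sq_le_hOddChromNum {V : Type*} [Fintype V] {G : SimpleGraph V}
    [DecidableRel G.Adj] {t : ℕ} (e : G ≃g rookGraph m) (ht : 1 ≤ t) :
    2 * m ^ 2 ≤ hOddChromNum (2 * (m - 1) + 1 - t) G * (t + 1) := by
  obtain ⟨σ, hσ⟩ := exists_isHOddColoring_hOddChromNum (2 * (m - 1) + 1 - t) G
  exact two_mul_sq_le_of_isHOddColoring ht (hσ.comp_iso e.symm)

end rookGraph

theorem stmt19_general (Δ : ℕ) (hΔeven : Even Δ) (t : ℕ) (ht1 : 1 ≤ t) :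
    ∃ (n : ℕ) (G : SimpleGraph (Fin n)),
      (∀ v, G.degree v = Δ) ∧
      (1 / 2 : ℝ) * (Δ : ℝ) ^ 2 / ((t : ℝ) + 1) < (hOddChromNum (Δ + 1 - t) G : ℝ) := by
  obtain ⟨d, rfl⟩ := hΔeven
  -- Keeping `G` abstract leaves the classical `DecidableRel G.Adj` of the statement as the only
  -- instance in sight, rather than the one `comap` would provide.
  obtain ⟨G, ⟨e⟩⟩ :
      ∃ G : SimpleGraph (Fin ((d + 1) * (d + 1))), Nonempty (G ≃g rookGraph (d + 1)) :=
    ⟨_, ⟨Iso.comap finProdFinEquiv.symm _⟩⟩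
  have hdd : d + d = 2 * (d + 1 - 1) := by omega
  refine ⟨_, G, fun v => by rw [← e.degree_eq, rookGraph.degree_eq, hdd], ?_⟩
  have hbound : 2 * ((d : ℝ) + 1) ^ 2 ≤ hOddChromNum (d + d + 1 - t) G * ((t : ℝ) + 1) := by
    rw [hdd]
    exact_mod_cast rookGraph.two_mul_sq_le_hOddChromNum e ht1
  rw [div_lt_iff₀ (by positivity)]
  push_cast
  nlinarith [(d.cast_nonneg : (0 : ℝ) ≤ d)]

theorem stmt19 (Δ : ℕ) (hΔeven : Even Δ) (hΔ : 2 ≤ Δ) (t : ℕ) (ht1 : 1 ≤ t) (ht2 : t ≤ Δ) :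
    ∃ (n : ℕ) (G : SimpleGraph (Fin n)),
      (∀ v, G.degree v = Δ) ∧
      (1 / 2 : ℝ) * (Δ : ℝ) ^ 2 / ((t : ℝ) + 1) < (hOddChromNum (Δ + 1 - t) G : ℝ) :=
  stmt19_general Δ hΔeven t ht1
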